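/- Under the assumptions that each potential Gₚ satisfies sup_{x,y} Gₚ(x)/Gₚ(y) ≤ δ and each Markov kernel Mₚᵏ satisfies Mₚᵏ(x,·) ≥ ε·Mₚᵏ(y,·) for all x,y (with ε ∈ (0,1), δ ∈ [1,∞)), the normalized semigroup Φ_{s,t}ᵏ of the Feynman–Kac flow satisfies the uniform stability estimate: for any 0 ≤ s < t and any probability measures μ, ρ on E_{s-1}, ‖Φ_{s,t}ᵏ(μ) − Φ_{s,t}ᵏ(ρ)‖_tv ≤ 2·(δ/ε)²·(1−ε²)^{t−s}·‖μ − ρ‖_tv. -/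

import Mathlib

open MeasureTheory ProbabilityTheory

/-- Total variation distance as the supremum over measurable sets. -/
noncomputable def tvDist {E : Type*} [MeasurableSpace E] (μ ρ : Measure E) : ℝ :=
  ⨆ A : {s : Set E // MeasurableSet s}, |(μ A).toReal - (ρ A).toReal|

/-- One selection–mutation step of a Feynman–Kac flow:
`Φ(μ) = (μ(G))⁻¹ · (G·μ) M`, i.e. reweighting by the potential `G` followed by the
Markov transition `M`. -/
noncomputable def fkStep {E : Type*} [MeasurableSpace E] (G : E → ℝ) (M : Kernel E E)
    (μ : Measure E) : Measure E :=
  ((∫⁻ x, ENNReal.ofReal (G x) ∂μ)⁻¹ •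
    μ.withDensity (fun x => ENNReal.ofReal (G x))).bind (fun x => M x)

/-- The normalized Feynman–Kac semigroup `Φ_{s,s+n} = Φ_{s+n} ∘ ⋯ ∘ Φ_{s+1}`, where
`Φ_p` uses potential `G_{p-1}` and kernel `M_p`. -/
noncomputable def fkIter {E : Type*} [MeasurableSpace E] (G : ℕ → E → ℝ)
    (M : ℕ → Kernel E E) (s : ℕ) : ℕ → Measure E → Measure E
  | 0, μ => μ
  | n + 1, μ => fkStep (G (s + n)) (M (s + n + 1)) (fkIter G M s n μ)

/-!
Let `Q_{s,t}` be the unnormalised semigroup, `h = Q_{s,t} 1` and `P f = Q_{s,t} f / h`, so that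
`Φ_{s,t}(μ)(f) = μ(h · P f) / μ(h)`. One step of `P` averages against the normalised measures
`h(z) M(x, dz) / M(h)(x)`; by the minorisation each of them dominates `ε²` times any other, so
each step contracts oscillations by `1 - ε²` and `osc (P 1_A) ≤ (1 - ε²)^(t-s)`. The bounds on
`G` and `M` give the Harnack inequality `h x ≤ (δ/ε) h y`. Centring `P 1_A` at its `ρ`-weighted
mean, its positive and negative parts weighted by `h` are bounded by `(1 - ε²)^(t-s) (δ/ε) μ(h)`,
so their integrals move by at most that times `‖μ - ρ‖_tv` from `ρ` to `μ`. This gives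
`‖Φ_{s,t}(μ) - Φ_{s,t}(ρ)‖_tv ≤ 2 (δ/ε) (1 - ε²)^(t-s) ‖μ - ρ‖_tv`, and `δ/ε ≥ 1`.
-/

open ENNReal Set

section TotalVariation

variable {E : Type*} [MeasurableSpace E]

lemma tvDist_comm (μ ρ : Measure E) : tvDist μ ρ = tvDist ρ μ := by
  simp only [tvDist, abs_sub_comm]

variable {μ ρ : Measure E} [IsFiniteMeasure μ] [IsFiniteMeasure ρ]

lemma bddAbove_range_abs_sub_measure :
    BddAbove (range fun A : {s : Set E // MeasurableSet s} => |(μ A).toReal - (ρ A).toReal|) := by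
  refine ⟨(μ univ).toReal + (ρ univ).toReal, ?_⟩
  rintro _ ⟨A, rfl⟩
  refine (abs_sub _ _).trans (add_le_add ?_ ?_) <;> simpa using measure_mono (subset_univ _)

lemma abs_sub_le_tvDist {A : Set E} (hA : MeasurableSet A) :
    |(μ A).toReal - (ρ A).toReal| ≤ tvDist μ ρ :=
  le_ciSup bddAbove_range_abs_sub_measure ⟨A, hA⟩

lemma tvDist_nonneg : 0 ≤ tvDist μ ρ :=
  (abs_nonneg _).trans (abs_sub_le_tvDist (μ := μ) (ρ := ρ) MeasurableSet.empty)

lemma measure_le_add_tvDist {A : Set E} (hA : MeasurableSet A) :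
    μ A ≤ ρ A + ENNReal.ofReal (tvDist μ ρ) := by
  have h := (le_abs_self _).trans (abs_sub_le_tvDist (μ := μ) (ρ := ρ) hA)
  rw [← ofReal_toReal (measure_ne_top μ A), ← ofReal_toReal (measure_ne_top ρ A),
    ← ofReal_add toReal_nonneg tvDist_nonneg]
  exact ofReal_le_ofReal (by linarith)

lemma tvDist_le_of_le_add {c : ℝ} (hc : 0 ≤ c)
    (hμρ : ∀ A, MeasurableSet A → μ A ≤ ρ A + ENNReal.ofReal c)
    (hρμ : ∀ A, MeasurableSet A → ρ A ≤ μ A + ENNReal.ofReal c) : tvDist μ ρ ≤ c := by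
  have : Nonempty {s : Set E // MeasurableSet s} := ⟨⟨∅, MeasurableSet.empty⟩⟩
  have toReal_le {ν ν' : Measure E} [IsFiniteMeasure ν'] {A : Set E}
      (h : ν A ≤ ν' A + ENNReal.ofReal c) : (ν A).toReal ≤ (ν' A).toReal + c :=
    toReal_le_of_le_ofReal (add_nonneg toReal_nonneg hc)
      (by rwa [ofReal_add toReal_nonneg hc, ofReal_toReal (measure_ne_top _ _)])
  refine ciSup_le fun ⟨A, hA⟩ => abs_sub_le_iff.2 ⟨?_, ?_⟩
  · linarith [toReal_le (hμρ A hA)]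
  · linarith [toReal_le (hρμ A hA)]

lemma lintegral_le_lintegral_add_mul_tvDist {f : E → ℝ≥0∞} (hf : Measurable f) {L : ℝ≥0∞}
    (hL : L ≠ ⊤) (hfL : ∀ x, f x ≤ L) :
    ∫⁻ x, f x ∂μ ≤ ∫⁻ x, f x ∂ρ + L * ENNReal.ofReal (tvDist μ ρ) := by
  set F : E → ℝ := fun x => (f x).toReal
  have hF : Measurable F := hf.ennreal_toReal
  have layercake (ν : Measure E) : ∫⁻ x, f x ∂ν = ∫⁻ t in Ioi 0, ν {x | t < F x} := by
    rw [← lintegral_eq_lintegral_meas_lt ν (.of_forall fun _ => toReal_nonneg) hF.aemeasurable]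
    exact lintegral_congr fun x => (ofReal_toReal ((hfL x).trans_lt hL.lt_top).ne).symm
  have hlevel (t : ℝ) : μ {x | t < F x} ≤
      ρ {x | t < F x} + (Iio L.toReal).indicator (fun _ => ENNReal.ofReal (tvDist μ ρ)) t := by
    by_cases ht : t < L.toReal
    · simpa [ht] using measure_le_add_tvDist (measurableSet_lt measurable_const hF)
    · have hempty : {x | t < F x} = ∅ :=
        eq_empty_of_forall_notMem fun x hx => ht (hx.trans_le (toReal_mono hL (hfL x)))
      simp [hempty, ht]
  calc ∫⁻ x, f x ∂μ
      ≤ ∫⁻ t in Ioi 0, ρ {x | t < F x}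
          + (Iio L.toReal).indicator (fun _ => ENNReal.ofReal (tvDist μ ρ)) t :=
        (layercake μ).trans_le (lintegral_mono hlevel)
    _ = ∫⁻ x, f x ∂ρ + L * ENNReal.ofReal (tvDist μ ρ) := by
        rw [lintegral_add_right _ (measurable_const.indicator measurableSet_Iio),
          lintegral_indicator_const measurableSet_Iio, Measure.restrict_apply measurableSet_Iio,
          Iio_inter_Ioi, Real.volume_Ioo, sub_zero, ofReal_toReal hL, mul_comm, layercake ρ]

end TotalVariation

lemma ENNReal.div_le_div_add_one_sub_sq_mul {a b a' b' e B : ℝ≥0∞} (he : e ≤ 1)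
    (hab : a ≤ B * b) (ha : e * a ≤ a') (hb : e * b' ≤ b) (hb'0 : b' ≠ 0) (hb't : b' ≠ ⊤) :
    a / b ≤ a' / b' + (1 - e ^ 2) * B := by
  have hsq : e ^ 2 * (a / b) ≤ a' / b' := by
    rw [← mul_div_assoc]
    refine div_le_of_le_mul ?_
    calc e ^ 2 * a = e * (e * a) := by ring
      _ ≤ e * a' := by gcongr
      _ = a' / b' * (e * b') := by rw [mul_left_comm, ENNReal.div_mul_cancel hb'0 hb't]
      _ ≤ a' / b' * b := by gcongr
  have hrest : (1 - e ^ 2) * (a / b) ≤ (1 - e ^ 2) * B := by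
    gcongr
    exact div_le_of_le_mul hab
  calc a / b = e ^ 2 * (a / b) + (1 - e ^ 2) * (a / b) := by
        rw [← add_mul, add_tsub_cancel_of_le (pow_le_one₀ zero_le he), one_mul]
    _ ≤ a' / b' + (1 - e ^ 2) * B := add_le_add hsq hrest

section WeightedMeans

variable {E : Type*} [MeasurableSpace E]

lemma mul_lintegral_le_of_smul_le {ν ν' : Measure E} {c : ℝ≥0∞} (h : c • ν ≤ ν')
    (f : E → ℝ≥0∞) : c * ∫⁻ x, f x ∂ν ≤ ∫⁻ x, f x ∂ν' := by
  rw [← smul_eq_mul, ← lintegral_smul_measure]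
  exact lintegral_mono' h le_rfl

lemma lintegral_mul_div_eq_tsub_add {ν : Measure E} {u h : E → ℝ≥0∞} (hh : Measurable h)
    {c : ℝ≥0∞} (hc : ∀ x, c ≤ u x) (h0 : ∫⁻ x, h x ∂ν ≠ 0) (htop : ∫⁻ x, h x ∂ν ≠ ⊤) :
    (∫⁻ x, u x * h x ∂ν) / ∫⁻ x, h x ∂ν
      = (∫⁻ x, (u x - c) * h x ∂ν) / ∫⁻ x, h x ∂ν + c := by
  have hsplit : ∫⁻ x, u x * h x ∂ν = ∫⁻ x, (u x - c) * h x ∂ν + c * ∫⁻ x, h x ∂ν := by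
    rw [← lintegral_const_mul c hh, ← lintegral_add_right _ (hh.const_mul c)]
    exact lintegral_congr fun x => by rw [← add_mul, tsub_add_cancel_of_le (hc x)]
  rw [hsplit, ENNReal.add_div, mul_div_assoc, ENNReal.div_self h0 htop, mul_one]

lemma lintegral_mul_div_le_add_of_smul_le {ν₁ ν₂ : Measure E} {e B : ℝ≥0∞} (he : e ≤ 1)
    (h₁₂ : e • ν₂ ≤ ν₁) (h₂₁ : e • ν₁ ≤ ν₂) {u h : E → ℝ≥0∞} (hh : Measurable h)
    (hosc : ∀ x y, u x ≤ u y + B) (h₁0 : ∫⁻ x, h x ∂ν₁ ≠ 0) (h₁top : ∫⁻ x, h x ∂ν₁ ≠ ⊤)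
    (h₂0 : ∫⁻ x, h x ∂ν₂ ≠ 0) (h₂top : ∫⁻ x, h x ∂ν₂ ≠ ⊤) :
    (∫⁻ x, u x * h x ∂ν₁) / ∫⁻ x, h x ∂ν₁
      ≤ (∫⁻ x, u x * h x ∂ν₂) / ∫⁻ x, h x ∂ν₂ + (1 - e ^ 2) * B := by
  set i := ⨅ x, u x
  have hi : ∀ x, i ≤ u x := iInf_le u
  have hiB : ∀ x, u x - i ≤ B := fun x =>
    tsub_le_iff_left.2 (tsub_le_iff_right.1 (le_iInf fun y => tsub_le_iff_right.2 (hosc x y)))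
  rw [lintegral_mul_div_eq_tsub_add hh hi h₁0 h₁top,
    lintegral_mul_div_eq_tsub_add hh hi h₂0 h₂top, add_right_comm]
  refine add_le_add_left (div_le_div_add_one_sub_sq_mul he ?_
    (mul_lintegral_le_of_smul_le h₂₁ _) (mul_lintegral_le_of_smul_le h₁₂ _) h₂0 h₂top) i
  calc ∫⁻ x, (u x - i) * h x ∂ν₁ ≤ ∫⁻ x, B * h x ∂ν₁ := lintegral_mono fun x => by
        gcongr; exact hiB x
    _ = B * ∫⁻ x, h x ∂ν₁ := lintegral_const_mul B hh

variable {ν : Measure E} [IsProbabilityMeasure ν] {f : E → ℝ≥0∞} {K : ℝ≥0∞}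

lemma le_mul_lintegral_of_le_mul (hK : K ≠ ⊤) {x : E} (hf : ∀ y, f x ≤ K * f y) :
    f x ≤ K * ∫⁻ y, f y ∂ν :=
  calc f x = ∫⁻ _, f x ∂ν := by simp
    _ ≤ ∫⁻ y, K * f y ∂ν := lintegral_mono hf
    _ = K * ∫⁻ y, f y ∂ν := lintegral_const_mul' K f hK

lemma lintegral_le_mul_of_le_mul {x : E} (hf : ∀ y, f y ≤ K * f x) :
    ∫⁻ y, f y ∂ν ≤ K * f x :=
  (lintegral_mono hf).trans_eq (by simp)

lemma lintegral_ne_zero_of_le_mul (hK : K ≠ ⊤) (hf : ∀ x y, f x ≤ K * f y) {x : E}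
    (hx : f x ≠ 0) : ∫⁻ y, f y ∂ν ≠ 0 := fun h0 =>
  hx (by simpa [h0] using le_mul_lintegral_of_le_mul (ν := ν) hK (hf x))

lemma lintegral_ne_top_of_le_mul (hK : K ≠ ⊤) (hf : ∀ x y, f x ≤ K * f y) {x : E}
    (hx : f x ≠ ⊤) : ∫⁻ y, f y ∂ν ≠ ⊤ :=
  ne_top_of_le_ne_top (mul_ne_top hK hx) (lintegral_le_mul_of_le_mul fun y => hf y x)

end WeightedMeans

section WeightedMeanStability

variable {E : Type*} [MeasurableSpace E] {μ ρ : Measure E} {u h : E → ℝ≥0∞}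

lemma lintegral_mul_le_add_mul_tvDist [IsFiniteMeasure μ] [IsFiniteMeasure ρ]
    (hu : Measurable u) (hh : Measurable h) {c L : ℝ≥0∞} (hL : L ≠ ⊤)
    (hρ : ∫⁻ x, u x * h x ∂ρ = c * ∫⁻ x, h x ∂ρ) (hρtop : ∫⁻ x, u x * h x ∂ρ ≠ ⊤)
    (hpos : ∀ x, (u x - c) * h x ≤ L) (hneg : ∀ x, (c - u x) * h x ≤ L) :
    ∫⁻ x, u x * h x ∂μ ≤ c * ∫⁻ x, h x ∂μ + 2 * L * ENNReal.ofReal (tvDist μ ρ) := by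
  set g₁ : E → ℝ≥0∞ := fun x => (u x - c) * h x
  set g₂ : E → ℝ≥0∞ := fun x => (c - u x) * h x
  have hg₁ : Measurable g₁ := (hu.sub measurable_const).mul hh
  have hg₂ : Measurable g₂ := (measurable_const.sub hu).mul hh
  have hdecomp (ν : Measure E) :
      ∫⁻ x, u x * h x ∂ν + ∫⁻ x, g₂ x ∂ν = c * ∫⁻ x, h x ∂ν + ∫⁻ x, g₁ x ∂ν := by
    rw [← lintegral_add_right _ hg₂, ← lintegral_const_mul c hh, ← lintegral_add_right _ hg₁]
    refine lintegral_congr fun x => ?_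
    rcases le_total (u x) c with hx | hx
    <;> simp only [g₁, g₂, tsub_eq_zero_of_le hx, zero_mul, add_zero, ← add_mul,
      add_tsub_cancel_of_le hx]
  have hbalance : ∫⁻ x, g₂ x ∂ρ = ∫⁻ x, g₁ x ∂ρ := by
    have := hdecomp ρ
    rwa [← hρ, ENNReal.add_right_inj hρtop] at this
  have hg₂top : ∫⁻ x, g₂ x ∂μ ≠ ⊤ :=
    ne_top_of_le_ne_top (mul_ne_top hL (measure_ne_top μ univ))
      ((lintegral_mono hneg).trans_eq (lintegral_const L))
  refine ENNReal.le_of_add_le_add_right hg₂top ?_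
  calc ∫⁻ x, u x * h x ∂μ + ∫⁻ x, g₂ x ∂μ
      = c * ∫⁻ x, h x ∂μ + ∫⁻ x, g₁ x ∂μ := hdecomp μ
    _ ≤ c * ∫⁻ x, h x ∂μ + (∫⁻ x, g₁ x ∂ρ + L * ENNReal.ofReal (tvDist μ ρ)) := by
        gcongr; exact lintegral_le_lintegral_add_mul_tvDist hg₁ hL hpos
    _ ≤ c * ∫⁻ x, h x ∂μ + (∫⁻ x, g₂ x ∂μ + L * ENNReal.ofReal (tvDist μ ρ)
          + L * ENNReal.ofReal (tvDist μ ρ)) := by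
        rw [← hbalance, tvDist_comm]
        gcongr
        exact lintegral_le_lintegral_add_mul_tvDist hg₂ hL hneg
    _ = c * ∫⁻ x, h x ∂μ + 2 * L * ENNReal.ofReal (tvDist μ ρ) + ∫⁻ x, g₂ x ∂μ := by ring

lemma lintegral_mul_div_le_add_mul_tvDist [IsProbabilityMeasure μ] [IsProbabilityMeasure ρ]
    (hu : Measurable u) (hh : Measurable h) {B K : ℝ≥0∞} (hB : B ≠ ⊤) (hK : K ≠ ⊤)
    (hu1 : ∀ x, u x ≤ 1) (hosc : ∀ x y, u x ≤ u y + B) (h0 : ∀ x, h x ≠ 0)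
    (htop : ∀ x, h x ≠ ⊤) (hharnack : ∀ x y, h x ≤ K * h y) :
    (∫⁻ x, u x * h x ∂μ) / ∫⁻ x, h x ∂μ
      ≤ (∫⁻ x, u x * h x ∂ρ) / ∫⁻ x, h x ∂ρ + 2 * B * K * ENNReal.ofReal (tvDist μ ρ) := by
  obtain ⟨x₀⟩ := nonempty_of_isProbabilityMeasure μ
  have hμ0 := lintegral_ne_zero_of_le_mul (ν := μ) hK hharnack (h0 x₀)
  have hμtop := lintegral_ne_top_of_le_mul (ν := μ) hK hharnack (htop x₀)
  have hρ0 := lintegral_ne_zero_of_le_mul (ν := ρ) hK hharnack (h0 x₀)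
  have hρtop := lintegral_ne_top_of_le_mul (ν := ρ) hK hharnack (htop x₀)
  set c := (∫⁻ x, u x * h x ∂ρ) / ∫⁻ x, h x ∂ρ
  have huhρ : ∫⁻ x, u x * h x ∂ρ ≤ ∫⁻ x, h x ∂ρ :=
    lintegral_mono fun x => mul_le_of_le_one_left zero_le (hu1 x)
  have hc_le (x : E) : c ≤ u x + B := by
    refine div_le_of_le_mul ((lintegral_mono fun y => ?_).trans_eq (lintegral_const_mul _ hh))
    exact mul_le_mul_left (hosc y x) _
  have hle_c (x : E) : u x ≤ c + B := by
    refine tsub_le_iff_right.1 ((ENNReal.le_div_iff_mul_le (.inl hρ0) (.inl hρtop)).2 ?_)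
    refine (lintegral_const_mul _ hh).symm.trans_le (lintegral_mono fun y => ?_)
    exact mul_le_mul_left (tsub_le_iff_right.2 (hosc x y)) _
  have hbound (x : E) {v : ℝ≥0∞} (hv : v ≤ B) : v * h x ≤ B * (K * ∫⁻ y, h y ∂μ) :=
    mul_le_mul' hv (le_mul_lintegral_of_le_mul hK (hharnack x))
  have key := lintegral_mul_le_add_mul_tvDist (μ := μ) hu hh (c := c)
    (mul_ne_top hB (mul_ne_top hK hμtop)) (ENNReal.div_mul_cancel hρ0 hρtop).symm
    (ne_top_of_le_ne_top hρtop huhρ) (fun x => hbound x (tsub_le_iff_left.2 (hle_c x)))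
    (fun x => hbound x (tsub_le_iff_left.2 (hc_le x)))
  refine div_le_of_le_mul (key.trans_eq ?_)
  ring

end WeightedMeanStability

section Potential

variable {E : Type*} {G : ℕ → E → ℝ} {δ : ℝ}

lemma one_le_of_potential_le_mul (hGpos : ∀ p x, 0 < G p x) (hG : ∀ p x y, G p x ≤ δ * G p y)
    (x : E) : 1 ≤ δ :=
  (le_mul_iff_one_le_left (hGpos 0 x)).1 (hG 0 x x)

lemma ofReal_potential_le_mul (hGpos : ∀ p x, 0 < G p x) (hG : ∀ p x y, G p x ≤ δ * G p y)
    (p : ℕ) (x y : E) :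
    ENNReal.ofReal (G p x) ≤ ENNReal.ofReal δ * ENNReal.ofReal (G p y) := by
  rw [← ofReal_mul (zero_le_one.trans (one_le_of_potential_le_mul hGpos hG x))]
  exact ofReal_le_ofReal (hG p x y)

end Potential

section FeynmanKac

variable {E : Type*} [MeasurableSpace E]

/-- `fkQ G M s n f = Q_{s+1} ⋯ Q_{s+n} f`, where `Q_p f (x) = G_{p-1}(x) ∫ f dM_p(x)`. -/
noncomputable def fkQ (G : ℕ → E → ℝ) (M : ℕ → Kernel E E) :
    ℕ → ℕ → (E → ℝ≥0∞) → E → ℝ≥0∞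
  | _, 0, f => f
  | s, n + 1, f => fun x =>
      ENNReal.ofReal (G s x) * ∫⁻ y, fkQ G M (s + 1) n f y ∂M (s + 1) x

noncomputable def fkP (G : ℕ → E → ℝ) (M : ℕ → Kernel E E) (s n : ℕ) (f : E → ℝ≥0∞)
    (x : E) : ℝ≥0∞ :=
  fkQ G M s n f x / fkQ G M s n 1 x

lemma lintegral_fkStep {G : E → ℝ} (hG : Measurable G) (M : Kernel E E) (μ : Measure E)
    {f : E → ℝ≥0∞} (hf : Measurable f) :
    ∫⁻ x, f x ∂fkStep G M μ
      = (∫⁻ x, ENNReal.ofReal (G x) ∂μ)⁻¹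
        * ∫⁻ x, ENNReal.ofReal (G x) * ∫⁻ y, f y ∂M x ∂μ := by
  rw [fkStep, Measure.lintegral_bind M.measurable.aemeasurable hf.aemeasurable,
    lintegral_smul_measure, smul_eq_mul,
    lintegral_withDensity_eq_lintegral_mul _ hG.ennreal_ofReal hf.lintegral_kernel]
  rfl

lemma isProbabilityMeasure_fkStep {G : E → ℝ} (hG : Measurable G) (M : Kernel E E)
    [IsMarkovKernel M] {μ : Measure E} (h0 : ∫⁻ x, ENNReal.ofReal (G x) ∂μ ≠ 0)
    (htop : ∫⁻ x, ENNReal.ofReal (G x) ∂μ ≠ ⊤) : IsProbabilityMeasure (fkStep G M μ) := by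
  constructor
  rw [← lintegral_one, lintegral_fkStep hG M μ (f := fun _ => 1) measurable_const]
  simpa using ENNReal.inv_mul_cancel h0 htop

lemma fkIter_succ' (G : ℕ → E → ℝ) (M : ℕ → Kernel E E) (s : ℕ) :
    ∀ (n : ℕ) (μ : Measure E),
      fkIter G M s (n + 1) μ = fkIter G M (s + 1) n (fkStep (G s) (M (s + 1)) μ)
  | 0, μ => rfl
  | n + 1, μ => by
      rw [fkIter, fkIter_succ' G M s n μ, fkIter, show s + (n + 1) = s + 1 + n by omega]

variable {G : ℕ → E → ℝ} {M : ℕ → Kernel E E}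

lemma measurable_fkQ (hGm : ∀ p, Measurable (G p)) {f : E → ℝ≥0∞} (hf : Measurable f) :
    ∀ n s, Measurable (fkQ G M s n f)
  | 0, _ => hf
  | n + 1, s => (hGm s).ennreal_ofReal.mul (measurable_fkQ hGm hf n (s + 1)).lintegral_kernel

lemma fkQ_mono {f g : E → ℝ≥0∞} (hfg : f ≤ g) : ∀ n s, fkQ G M s n f ≤ fkQ G M s n g
  | 0, _ => hfg
  | n + 1, s => fun x => by
      simp only [fkQ]
      gcongr with y
      exact fkQ_mono hfg n (s + 1) y

variable {δ ε : ℝ}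

lemma lintegral_ofReal_potential_ne_zero_ne_top (hGpos : ∀ p x, 0 < G p x)
    (hG : ∀ p x y, G p x ≤ δ * G p y) (p : ℕ) (μ : Measure E) [IsProbabilityMeasure μ] :
    ∫⁻ x, ENNReal.ofReal (G p x) ∂μ ≠ 0 ∧ ∫⁻ x, ENNReal.ofReal (G p x) ∂μ ≠ ⊤ := by
  obtain ⟨x₀⟩ := nonempty_of_isProbabilityMeasure μ
  exact ⟨lintegral_ne_zero_of_le_mul ofReal_ne_top (ofReal_potential_le_mul hGpos hG p)
      (ofReal_pos.2 (hGpos p x₀)).ne',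
    lintegral_ne_top_of_le_mul ofReal_ne_top (ofReal_potential_le_mul hGpos hG p)
      (x := x₀) ofReal_ne_top⟩

lemma isProbabilityMeasure_fkIter [∀ p, IsMarkovKernel (M p)] (hGm : ∀ p, Measurable (G p))
    (hGpos : ∀ p x, 0 < G p x) (hG : ∀ p x y, G p x ≤ δ * G p y) (s : ℕ) :
    ∀ (n : ℕ) (μ : Measure E) [IsProbabilityMeasure μ],
      IsProbabilityMeasure (fkIter G M s n μ)
  | 0, _, _ => ‹_›
  | n + 1, μ, _ => by
      have := isProbabilityMeasure_fkIter hGm hGpos hG s n μ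
      exact isProbabilityMeasure_fkStep (hGm _) _
        (lintegral_ofReal_potential_ne_zero_ne_top hGpos hG _ _).1
        (lintegral_ofReal_potential_ne_zero_ne_top hGpos hG _ _).2

lemma lintegral_fkIter [∀ p, IsMarkovKernel (M p)] (hGm : ∀ p, Measurable (G p))
    (hGpos : ∀ p x, 0 < G p x) (hG : ∀ p x y, G p x ≤ δ * G p y) {f : E → ℝ≥0∞}
    (hf : Measurable f) :
    ∀ (n s : ℕ) (μ : Measure E) [IsProbabilityMeasure μ],
      ∫⁻ x, f x ∂fkIter G M s n μ = (∫⁻ x, fkQ G M s n f x ∂μ) / ∫⁻ x, fkQ G M s n 1 x ∂μ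
  | 0, s, μ, _ => by simp [fkIter, fkQ]
  | n + 1, s, μ, _ => by
      obtain ⟨hG0, hGtop⟩ := lintegral_ofReal_potential_ne_zero_ne_top hGpos hG s μ
      have := isProbabilityMeasure_fkStep (hGm s) (M (s + 1)) hG0 hGtop
      rw [fkIter_succ', lintegral_fkIter hGm hGpos hG hf n (s + 1),
        lintegral_fkStep (hGm s) _ _ (measurable_fkQ hGm hf n (s + 1)),
        lintegral_fkStep (hGm s) _ _ (measurable_fkQ hGm measurable_one n (s + 1))]
      exact ENNReal.mul_div_mul_left _ _ (ENNReal.inv_ne_zero.2 hGtop)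
        (ENNReal.inv_ne_top.2 hG0)

lemma ofReal_smul_le_of_minorization
    (hM : ∀ (p : ℕ) (x y : E) (A : Set E), MeasurableSet A →
      ENNReal.ofReal ε * M p y A ≤ M p x A) (p : ℕ) (x y : E) :
    ENNReal.ofReal ε • (M p y : Measure E) ≤ M p x :=
  Measure.le_iff.2 fun A hA => hM p x y A hA

lemma fkQ_one_le_mul (hGpos : ∀ p x, 0 < G p x) (hG : ∀ p x y, G p x ≤ δ * G p y)
    (hε : ε ∈ Ioo (0 : ℝ) 1)
    (hM : ∀ (p : ℕ) (x y : E) (A : Set E), MeasurableSet A →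
      ENNReal.ofReal ε * M p y A ≤ M p x A) (n s : ℕ) (x y : E) :
    fkQ G M s n 1 x ≤ ENNReal.ofReal (δ / ε) * fkQ G M s n 1 y := by
  have hδ := one_le_of_potential_le_mul hGpos hG x
  cases n with
  | zero =>
      simpa [fkQ] using (one_le_div hε.1).2 (hε.2.le.trans hδ)
  | succ n =>
      have he : ENNReal.ofReal ε ≠ 0 := (ofReal_pos.2 hε.1).ne'
      have hM' : ∫⁻ z, fkQ G M (s + 1) n 1 z ∂M (s + 1) x
          ≤ (ENNReal.ofReal ε)⁻¹ * ∫⁻ z, fkQ G M (s + 1) n 1 z ∂M (s + 1) y := by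
        rw [← ENNReal.inv_mul_cancel_left (b := ∫⁻ z, _ ∂M (s + 1) x) he ofReal_ne_top]
        gcongr
        exact mul_lintegral_le_of_smul_le (ofReal_smul_le_of_minorization hM (s + 1) y x) _
      calc fkQ G M s (n + 1) 1 x
          ≤ (ENNReal.ofReal δ * ENNReal.ofReal (G s y))
            * ((ENNReal.ofReal ε)⁻¹ * ∫⁻ z, fkQ G M (s + 1) n 1 z ∂M (s + 1) y) :=
            mul_le_mul' (ofReal_potential_le_mul hGpos hG s x y) hM'
        _ = ENNReal.ofReal (δ / ε) * fkQ G M s (n + 1) 1 y := by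
            rw [ofReal_div_of_pos hε.1, div_eq_mul_inv]
            simp only [fkQ]
            ring

lemma fkP_le_one {f : E → ℝ≥0∞} (hf : f ≤ 1) (s n : ℕ) (x : E) : fkP G M s n f x ≤ 1 :=
  div_le_of_le_mul ((fkQ_mono hf n s x).trans_eq (one_mul _).symm)

variable [∀ p, IsMarkovKernel (M p)]

lemma fkQ_one_ne_zero (hGpos : ∀ p x, 0 < G p x) (hG : ∀ p x y, G p x ≤ δ * G p y)
    (hε : ε ∈ Ioo (0 : ℝ) 1)
    (hM : ∀ (p : ℕ) (x y : E) (A : Set E), MeasurableSet A →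
      ENNReal.ofReal ε * M p y A ≤ M p x A) : ∀ n s x, fkQ G M s n 1 x ≠ 0
  | 0, _, _ => one_ne_zero
  | n + 1, s, x => mul_ne_zero (ofReal_pos.2 (hGpos s x)).ne'
      (lintegral_ne_zero_of_le_mul ofReal_ne_top (fkQ_one_le_mul hGpos hG hε hM n (s + 1))
        (fkQ_one_ne_zero hGpos hG hε hM n (s + 1) x))

lemma fkQ_one_ne_top (hGpos : ∀ p x, 0 < G p x) (hG : ∀ p x y, G p x ≤ δ * G p y)
    (hε : ε ∈ Ioo (0 : ℝ) 1)
    (hM : ∀ (p : ℕ) (x y : E) (A : Set E), MeasurableSet A →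
      ENNReal.ofReal ε * M p y A ≤ M p x A) : ∀ n s x, fkQ G M s n 1 x ≠ ⊤
  | 0, _, _ => one_ne_top
  | n + 1, s, x => mul_ne_top ofReal_ne_top
      (lintegral_ne_top_of_le_mul ofReal_ne_top (fkQ_one_le_mul hGpos hG hε hM n (s + 1))
        (fkQ_one_ne_top hGpos hG hε hM n (s + 1) x))

lemma fkQ_eq_fkP_mul (hGpos : ∀ p x, 0 < G p x) (hG : ∀ p x y, G p x ≤ δ * G p y)
    (hε : ε ∈ Ioo (0 : ℝ) 1)
    (hM : ∀ (p : ℕ) (x y : E) (A : Set E), MeasurableSet A →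
      ENNReal.ofReal ε * M p y A ≤ M p x A) (f : E → ℝ≥0∞) (s n : ℕ) (x : E) :
    fkQ G M s n f x = fkP G M s n f x * fkQ G M s n 1 x :=
  (ENNReal.div_mul_cancel (fkQ_one_ne_zero hGpos hG hε hM n s x)
    (fkQ_one_ne_top hGpos hG hε hM n s x)).symm

lemma fkP_succ (hGpos : ∀ p x, 0 < G p x) (hG : ∀ p x y, G p x ≤ δ * G p y)
    (hε : ε ∈ Ioo (0 : ℝ) 1)
    (hM : ∀ (p : ℕ) (x y : E) (A : Set E), MeasurableSet A →
      ENNReal.ofReal ε * M p y A ≤ M p x A) (f : E → ℝ≥0∞) (s n : ℕ) (x : E) :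
    fkP G M s (n + 1) f x
      = (∫⁻ z, fkP G M (s + 1) n f z * fkQ G M (s + 1) n 1 z ∂M (s + 1) x)
        / ∫⁻ z, fkQ G M (s + 1) n 1 z ∂M (s + 1) x := by
  simp only [← fkQ_eq_fkP_mul hGpos hG hε hM]
  exact ENNReal.mul_div_mul_left _ _ (ofReal_pos.2 (hGpos s x)).ne' ofReal_ne_top

lemma fkP_le_fkP_add (hGm : ∀ p, Measurable (G p)) (hGpos : ∀ p x, 0 < G p x)
    (hG : ∀ p x y, G p x ≤ δ * G p y) (hε : ε ∈ Ioo (0 : ℝ) 1)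
    (hM : ∀ (p : ℕ) (x y : E) (A : Set E), MeasurableSet A →
      ENNReal.ofReal ε * M p y A ≤ M p x A) {f : E → ℝ≥0∞} (hf : f ≤ 1) :
    ∀ n s x y, fkP G M s n f x ≤ fkP G M s n f y + ENNReal.ofReal ((1 - ε ^ 2) ^ n)
  | 0, s, x, y => by
      simpa using (fkP_le_one hf s 0 x).trans le_add_self
  | n + 1, s, x, y => by
      have hrate : (1 - ENNReal.ofReal ε ^ 2) * ENNReal.ofReal ((1 - ε ^ 2) ^ n)
          = ENNReal.ofReal ((1 - ε ^ 2) ^ (n + 1)) := by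
        rw [← ofReal_pow hε.1.le, ← ofReal_one, ← ofReal_sub _ (sq_nonneg ε),
          ← ofReal_mul (sub_nonneg.2 (pow_le_one₀ hε.1.le hε.2.le)), pow_succ' (1 - ε ^ 2) n]
      have hharnack := fkQ_one_le_mul (M := M) hGpos hG hε hM n (s + 1)
      have h0 := fkQ_one_ne_zero hGpos hG hε hM n (s + 1)
      have htop := fkQ_one_ne_top hGpos hG hε hM n (s + 1)
      rw [fkP_succ hGpos hG hε hM, fkP_succ hGpos hG hε hM, ← hrate]
      exact lintegral_mul_div_le_add_of_smul_le (ofReal_le_one.2 hε.2.le)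
        (ofReal_smul_le_of_minorization hM (s + 1) x y)
        (ofReal_smul_le_of_minorization hM (s + 1) y x)
        (measurable_fkQ hGm measurable_one n (s + 1))
        (fkP_le_fkP_add hGm hGpos hG hε hM hf n (s + 1))
        (lintegral_ne_zero_of_le_mul ofReal_ne_top hharnack (h0 x))
        (lintegral_ne_top_of_le_mul ofReal_ne_top hharnack (htop x))
        (lintegral_ne_zero_of_le_mul ofReal_ne_top hharnack (h0 y))
        (lintegral_ne_top_of_le_mul ofReal_ne_top hharnack (htop y))

lemma fkIter_apply_le_add (hGm : ∀ p, Measurable (G p)) (hGpos : ∀ p x, 0 < G p x)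
    (hG : ∀ p x y, G p x ≤ δ * G p y) (hε : ε ∈ Ioo (0 : ℝ) 1)
    (hM : ∀ (p : ℕ) (x y : E) (A : Set E), MeasurableSet A →
      ENNReal.ofReal ε * M p y A ≤ M p x A) (s n : ℕ) (μ ρ : Measure E)
    [IsProbabilityMeasure μ] [IsProbabilityMeasure ρ] {A : Set E} (hA : MeasurableSet A) :
    fkIter G M s n μ A
      ≤ fkIter G M s n ρ A + ENNReal.ofReal (2 * (δ / ε) * (1 - ε ^ 2) ^ n * tvDist μ ρ) := by
  have hf : Measurable (A.indicator (1 : E → ℝ≥0∞)) := measurable_one.indicator hA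
  have hrepr (ν : Measure E) [IsProbabilityMeasure ν] : fkIter G M s n ν A
      = (∫⁻ x, fkP G M s n (A.indicator 1) x * fkQ G M s n 1 x ∂ν)
        / ∫⁻ x, fkQ G M s n 1 x ∂ν := by
    rw [← lintegral_indicator_one hA, lintegral_fkIter hGm hGpos hG hf]
    simp only [fkQ_eq_fkP_mul hGpos hG hε hM (A.indicator 1)]
  have hδε : 0 ≤ δ / ε := div_nonneg (zero_le_one.trans (one_le_of_potential_le_mul hGpos hG
    (nonempty_of_isProbabilityMeasure μ).some)) hε.1.le
  have hrate : 0 ≤ (1 - ε ^ 2) ^ n := pow_nonneg (sub_nonneg.2 (pow_le_one₀ hε.1.le hε.2.le)) n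
  rw [hrepr μ, hrepr ρ, ofReal_mul (by positivity), ofReal_mul (by positivity),
    ofReal_mul zero_le_two, ofReal_ofNat, mul_right_comm 2]
  exact lintegral_mul_div_le_add_mul_tvDist
    ((measurable_fkQ hGm hf n s).div (measurable_fkQ hGm measurable_one n s))
    (measurable_fkQ hGm measurable_one n s) ofReal_ne_top ofReal_ne_top
    (fkP_le_one (indicator_le_self A 1) s n)
    (fkP_le_fkP_add hGm hGpos hG hε hM (indicator_le_self A 1) n s)
    (fkQ_one_ne_zero hGpos hG hε hM n s) (fkQ_one_ne_top hGpos hG hε hM n s)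
    (fkQ_one_le_mul hGpos hG hε hM n s)

lemma tvDist_fkIter_le (hGm : ∀ p, Measurable (G p)) (hGpos : ∀ p x, 0 < G p x)
    (hG : ∀ p x y, G p x ≤ δ * G p y) (hε : ε ∈ Ioo (0 : ℝ) 1)
    (hM : ∀ (p : ℕ) (x y : E) (A : Set E), MeasurableSet A →
      ENNReal.ofReal ε * M p y A ≤ M p x A) (s n : ℕ) (μ ρ : Measure E)
    [IsProbabilityMeasure μ] [IsProbabilityMeasure ρ] :
    tvDist (fkIter G M s n μ) (fkIter G M s n ρ) ≤ 2 * (δ / ε) * (1 - ε ^ 2) ^ n * tvDist μ ρ := by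
  have := isProbabilityMeasure_fkIter (M := M) hGm hGpos hG s n μ
  have := isProbabilityMeasure_fkIter (M := M) hGm hGpos hG s n ρ
  have hδε : 0 ≤ δ / ε := div_nonneg (zero_le_one.trans (one_le_of_potential_le_mul hGpos hG
    (nonempty_of_isProbabilityMeasure μ).some)) hε.1.le
  have hrate : 0 ≤ (1 - ε ^ 2) ^ n := pow_nonneg (sub_nonneg.2 (pow_le_one₀ hε.1.le hε.2.le)) n
  have htv : 0 ≤ tvDist μ ρ := tvDist_nonneg
  refine tvDist_le_of_le_add (by positivity)
    (fun A hA => fkIter_apply_le_add hGm hGpos hG hε hM s n μ ρ hA) fun A hA => ?_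
  rw [tvDist_comm μ]
  exact fkIter_apply_le_add hGm hGpos hG hε hM s n ρ μ hA

end FeynmanKac

theorem fk_semigroup_stability_general
    {E : Type*} [MeasurableSpace E]
    (G : ℕ → E → ℝ) (hGm : ∀ p, Measurable (G p)) (hGpos : ∀ p x, 0 < G p x)
    (δ : ℝ) (hG : ∀ p x y, G p x ≤ δ * G p y)
    (M : ℕ → Kernel E E) [∀ p, IsMarkovKernel (M p)]
    (ε : ℝ) (hε : ε ∈ Set.Ioo (0 : ℝ) 1)
    (hM : ∀ (p : ℕ) (x y : E) (A : Set E), MeasurableSet A →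
      ENNReal.ofReal ε * M p y A ≤ M p x A)
    (s n : ℕ)
    (μ ρ : Measure E) [IsProbabilityMeasure μ] [IsProbabilityMeasure ρ] :
    tvDist (fkIter G M s n μ) (fkIter G M s n ρ) ≤
      2 * (δ / ε) ^ 2 * (1 - ε ^ 2) ^ n * tvDist μ ρ := by
  have hδε : 1 ≤ δ / ε := (one_le_div hε.1).2 (hε.2.le.trans
    (one_le_of_potential_le_mul hGpos hG (nonempty_of_isProbabilityMeasure μ).some))
  have hrate : 0 ≤ (1 - ε ^ 2) ^ n := pow_nonneg (sub_nonneg.2 (pow_le_one₀ hε.1.le hε.2.le)) n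
  have htv : 0 ≤ tvDist μ ρ := tvDist_nonneg
  refine (tvDist_fkIter_le hGm hGpos hG hε hM s n μ ρ).trans ?_
  gcongr
  exact le_self_pow₀ hδε two_ne_zero

/-- Uniform exponential stability of the normalized Feynman–Kac semigroup: under the
potential ratio bound `G_p(x) ≤ δ·G_p(y)` and the kernel mutual minorization
`M_p(x,·) ≥ ε·M_p(y,·)`, for `0 ≤ s < t = s + n`,
`‖Φ_{s,t}(μ) − Φ_{s,t}(ρ)‖_tv ≤ 2(δ/ε)²(1−ε²)^{t−s}‖μ−ρ‖_tv`. -/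
theorem fk_semigroup_stability
    {E : Type*} [MeasurableSpace E]
    (G : ℕ → E → ℝ) (hGm : ∀ p, Measurable (G p)) (hGpos : ∀ p x, 0 < G p x)
    (hGb : ∀ p, ∃ C : ℝ, ∀ x, G p x ≤ C)
    (δ : ℝ) (hδ : 1 ≤ δ) (hG : ∀ p x y, G p x ≤ δ * G p y)
    (M : ℕ → Kernel E E) [∀ p, IsMarkovKernel (M p)]
    (ε : ℝ) (hε : ε ∈ Set.Ioo (0 : ℝ) 1)
    (hM : ∀ (p : ℕ) (x y : E) (A : Set E), MeasurableSet A →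
      ENNReal.ofReal ε * M p y A ≤ M p x A)
    (s n : ℕ) (hn : 1 ≤ n)
    (μ ρ : Measure E) [IsProbabilityMeasure μ] [IsProbabilityMeasure ρ] :
    tvDist (fkIter G M s n μ) (fkIter G M s n ρ) ≤
      2 * (δ / ε) ^ 2 * (1 - ε ^ 2) ^ n * tvDist μ ρ :=
  fk_semigroup_stability_general G hGm hGpos δ hG M ε hε hM s n μ ρ
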